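/- Let H be a hypothesis class with Ldim(H) = d < ∞ and S = ((x_t,y_t))_{t=1}^T an H-realizable sample. The following are equivalent: (A) for each t ∈ [T], Ldim(H_{S_{t−1}}) = max_r Ldim(H_{S_{t−1}}^{(x_t,r)}) and Ldim(H_{S_t}) ≥ Ldim(H_{S_{t−1}}) − 1; (B) every optimal online learner A for H satisfies M_A(S) = Ldim(H) − Ldim(H_S). Moreover, when these hold, every optimal learner predicts A(S_{t−1}, x_t) = argmax_{r∈{0,1}} Ldim(H_{S_{t−1}}^{(x_t,r)}) at every t ∈ [T]. -/

import Mathlib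

open Classical

variable {X : Type*}

/-- A hypothesis `h` is consistent with a sample `S`. -/
def Consistent (h : X → Bool) (S : List (X × Bool)) : Prop :=
  ∀ p ∈ S, h p.1 = p.2

/-- A sample is realizable by the class `H`. -/
def Realizable (H : Set (X → Bool)) (S : List (X × Bool)) : Prop :=
  ∃ h ∈ H, Consistent h S

/-- The version space `H_S`. -/
def VS (H : Set (X → Bool)) (S : List (X × Bool)) : Set (X → Bool) :=
  {h ∈ H | Consistent h S}

/-- `H^{(x,r)}`. -/
def Restrict (H : Set (X → Bool)) (x : X) (r : Bool) : Set (X → Bool) :=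
  {h ∈ H | h x = r}

/-- `Shatters H d` holds iff there is a complete binary tree of depth `d` shattered by `H`,
equivalently stated recursively. -/
def Shatters (H : Set (X → Bool)) : ℕ → Prop
  | 0 => H.Nonempty
  | d + 1 => ∃ x : X, Shatters (Restrict H x false) d ∧ Shatters (Restrict H x true) d

/-- Littlestone dimension, with `Ldim ∅ = ⊥` (playing the role of `-1`). -/
noncomputable def Ldim (H : Set (X → Bool)) : WithBot ℕ∞ :=
  ⨆ d ∈ {d : ℕ | Shatters H d}, ((d : ℕ∞) : WithBot ℕ∞)

def MistakesFrom (A : List (X × Bool) → X → Bool) :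
    List (X × Bool) → List (X × Bool) → ℕ
  | _, [] => 0
  | pre, p :: rest =>
      (if A pre p.1 ≠ p.2 then 1 else 0) + MistakesFrom A (pre ++ [p]) rest

/-- Number of mistakes that the online learner `A` makes on the sample `S`. -/
def Mistakes (A : List (X × Bool) → X → Bool) (S : List (X × Bool)) : ℕ :=
  MistakesFrom A [] S

/-- Mistake bound of `A` with respect to `H`. -/
noncomputable def MB (A : List (X × Bool) → X → Bool) (H : Set (X → Bool)) : ℕ∞ :=
  ⨆ S ∈ {S | Realizable H S}, (Mistakes A S : ℕ∞)

/-- `A` is an optimal online learner for `H`. -/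
def IsOptimal (A : List (X × Bool) → X → Bool) (H : Set (X → Bool)) : Prop :=
  MB A H = ⨅ B : List (X × Bool) → X → Bool, MB B H

/-- Post-`S` mistake bound of `A` w.r.t. `H`. -/
noncomputable def PostMB (A : List (X × Bool) → X → Bool) (H : Set (X → Bool))
    (S : List (X × Bool)) : ℕ∞ :=
  ⨆ S' ∈ {S' | Realizable H (S ++ S')}, ((Mistakes A (S ++ S') - Mistakes A S : ℕ) : ℕ∞)

/-- Optimal post-`S` mistake bound. -/
noncomputable def OptPostMB (H : Set (X → Bool)) (S : List (X × Bool)) : ℕ∞ :=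
  ⨅ A : List (X × Bool) → X → Bool, PostMB A H S

/-- `A` is anytime optimal for `H`. -/
def AnytimeOptimal (A : List (X × Bool) → X → Bool) (H : Set (X → Bool)) : Prop :=
  ∀ S, Realizable H S → PostMB A H S = OptPostMB H S

/-!
For an optimal learner `A` and every realizable prefix `P`, the adversary argument gives the
budget `M_A(P) + Ldim(H_P) ≤ d`, and learners all of whose mistakes decrease the dimension (such
as the SOA) are optimal. Under (A) the budget stays tight along `S`: a correct prediction must
follow a label that keeps the dimension, since the opposite label would break the budget, and a
mistake costs exactly one unit of dimension by the second condition. This also forces the argmax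
prediction. If (A) fails at step `t`, the SOA altered at that single step (predicting correctly
when both labels lose dimension, wrongly when the true label loses at least two) is still
optimal but ends with `M_A(S) + Ldim(H_S) < d`.
-/

section VersionSpace

variable {X : Type*} {H G G' : Set (X → Bool)} {P Q : List (X × Bool)}

theorem consistent_append {h : X → Bool} :
    Consistent h (P ++ Q) ↔ Consistent h P ∧ Consistent h Q := by
  simp [Consistent, or_imp, forall_and]

theorem Realizable.vs_nonempty (h : Realizable H P) : (VS H P).Nonempty := h

theorem vs_nil (H : Set (X → Bool)) : VS H [] = H := by
  ext h; simp [VS, Consistent]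

theorem vs_append_singleton (H : Set (X → Bool)) (P : List (X × Bool)) (p : X × Bool) :
    VS H (P ++ [p]) = Restrict (VS H P) p.1 p.2 := by
  ext h
  change h ∈ H ∧ Consistent h (P ++ [p]) ↔ (h ∈ H ∧ Consistent h P) ∧ h p.1 = p.2
  rw [consistent_append]
  simp only [Consistent, List.mem_singleton, forall_eq, and_assoc]

theorem vs_subset (H : Set (X → Bool)) (P : List (X × Bool)) : VS H P ⊆ H :=
  fun _ hh => hh.1

theorem vs_append_subset (H : Set (X → Bool)) (P Q : List (X × Bool)) :
    VS H (P ++ Q) ⊆ VS H P :=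
  fun _ hh => ⟨hh.1, (consistent_append.mp hh.2).1⟩

theorem restrict_subset (G : Set (X → Bool)) (x : X) (r : Bool) : Restrict G x r ⊆ G :=
  fun _ hh => hh.1

theorem restrict_mono (hG : G ⊆ G') (x : X) (r : Bool) : Restrict G x r ⊆ Restrict G' x r :=
  fun _ hh => ⟨hG hh.1, hh.2⟩

theorem Realizable.of_append (h : Realizable H (P ++ Q)) : Realizable H P :=
  Set.Nonempty.mono (vs_append_subset H P Q) h

theorem Realizable.take {S : List (X × Bool)} (h : Realizable H S) (n : ℕ) :
    Realizable H (S.take n) :=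
  Realizable.of_append (Q := S.drop n) (by rwa [List.take_append_drop])

end VersionSpace

section Shattering

variable {X : Type*} {G : Set (X → Bool)}

theorem Shatters.mono : ∀ {k : ℕ} {G G' : Set (X → Bool)}, G ⊆ G' → Shatters G k →
    Shatters G' k
  | 0, _, _, hG, h => Set.Nonempty.mono hG h
  | _ + 1, _, _, hG, ⟨x, hf, ht⟩ =>
    ⟨x, Shatters.mono (restrict_mono hG x false) hf, Shatters.mono (restrict_mono hG x true) ht⟩

theorem Shatters.nonempty : ∀ {k : ℕ} {G : Set (X → Bool)}, Shatters G k → G.Nonempty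
  | 0, _, h => h
  | _ + 1, G, ⟨x, hf, _⟩ => (Shatters.nonempty hf).mono (restrict_subset G x false)

theorem Shatters.anti : ∀ {k k' : ℕ} {G : Set (X → Bool)}, k' ≤ k → Shatters G k →
    Shatters G k'
  | _, 0, _, _, h => h.nonempty
  | _ + 1, _ + 1, _, hk, ⟨x, hf, ht⟩ =>
    ⟨x, Shatters.anti (by omega) hf, Shatters.anti (by omega) ht⟩
  | 0, _ + 1, _, hk, _ => absurd hk (by omega)

theorem shatters_succ_of_restrict {x : X} {r : Bool} {k : ℕ}
    (h : Shatters (Restrict G x r) k) (h' : Shatters (Restrict G x !r) k) :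
    Shatters G (k + 1) := by
  cases r
  exacts [⟨x, h, h'⟩, ⟨x, h', h⟩]

end Shattering

section LittlestoneDimension

variable {X : Type*} {G G' : Set (X → Bool)} {k d : ℕ}

theorem coe_le_ldim (h : Shatters G k) : ((k : ℕ∞) : WithBot ℕ∞) ≤ Ldim G :=
  le_iSup₂ (f := fun (j : ℕ) (_ : j ∈ {j : ℕ | Shatters G j}) => ((j : ℕ∞) : WithBot ℕ∞)) k h

theorem ldim_le_coe_iff : Ldim G ≤ ((k : ℕ∞) : WithBot ℕ∞) ↔ ¬ Shatters G (k + 1) := by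
  refine ⟨fun hle hsh => ?_, fun hns => iSup₂_le fun j hj => ?_⟩
  · have := (coe_le_ldim hsh).trans hle
    norm_cast at this
    omega
  · have : j ≤ k := by
      by_contra hjk
      exact hns (Shatters.anti (by omega) hj)
    exact_mod_cast this

theorem le_ldim_iff : ((k : ℕ∞) : WithBot ℕ∞) ≤ Ldim G ↔ Shatters G k := by
  refine ⟨fun hle => ?_, coe_le_ldim⟩
  by_contra hns
  cases k with
  | zero =>
    -- nothing is shattered, so `Ldim G = ⊥ < 0`
    have : Ldim G ≤ ⊥ := iSup₂_le fun j hj => absurd (Shatters.anti (Nat.zero_le j) hj) hns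
    exact absurd (hle.trans this) (by simp)
  | succ m =>
    have := hle.trans (ldim_le_coe_iff.mpr hns)
    norm_cast at this
    omega

theorem ldim_mono (h : G ⊆ G') : Ldim G ≤ Ldim G' :=
  biSup_mono fun _ hk => Shatters.mono h hk

theorem bddAbove_shatters {H : Set (X → Bool)} (hd : Ldim H ≤ ((d : ℕ∞) : WithBot ℕ∞))
    (hG : G ⊆ H) : BddAbove {k | Shatters G k} :=
  ⟨d, fun k hk => by
    have := (coe_le_ldim (Shatters.mono hG hk)).trans hd
    exact_mod_cast this⟩

/-- Meaningful only for nonempty classes of finite dimension: otherwise `sSup` on `ℕ` returns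
the junk value `0`. -/
noncomputable def ldimNat (G : Set (X → Bool)) : ℕ := sSup {k | Shatters G k}

theorem shatters_ldimNat (hne : G.Nonempty) (hG : BddAbove {k | Shatters G k}) :
    Shatters G (ldimNat G) :=
  Nat.sSup_mem ⟨0, hne⟩ hG

theorem le_ldimNat (hG : BddAbove {k | Shatters G k}) (h : Shatters G k) : k ≤ ldimNat G :=
  le_csSup hG h

theorem ldimNat_lt_iff (hne : G.Nonempty) (hG : BddAbove {k | Shatters G k}) :
    ldimNat G < k ↔ ¬ Shatters G k := by
  refine ⟨fun hlt h => (le_ldimNat hG h).not_gt hlt, fun hns => ?_⟩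
  by_contra hle
  exact hns ((shatters_ldimNat hne hG).anti (not_lt.mp hle))

theorem ldim_eq_ldimNat (hne : G.Nonempty) (hG : BddAbove {k | Shatters G k}) :
    Ldim G = ((ldimNat G : ℕ∞) : WithBot ℕ∞) :=
  le_antisymm (ldim_le_coe_iff.mpr fun h => (le_ldimNat hG h).not_gt (Nat.lt_succ_self _))
    (coe_le_ldim (shatters_ldimNat hne hG))

theorem ldimNat_eq_of_ldim_eq (h : Ldim G = ((d : ℕ∞) : WithBot ℕ∞)) : ldimNat G = d := by
  have hne : G.Nonempty := (le_ldim_iff.mp h.ge).nonempty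
  have := (ldim_eq_ldimNat hne (bddAbove_shatters h.le subset_rfl)).symm.trans h
  exact_mod_cast this

theorem ldimNat_mono (h : G ⊆ G') (hG' : BddAbove {k | Shatters G' k}) :
    ldimNat G ≤ ldimNat G' :=
  csSup_le' fun _ hk => le_ldimNat hG' (Shatters.mono h hk)

theorem ldim_eq_max_restrict_iff (hne : G.Nonempty) (hG : BddAbove {k | Shatters G k}) (x : X) :
    Ldim G = max (Ldim (Restrict G x false)) (Ldim (Restrict G x true)) ↔
      ∃ r, Shatters (Restrict G x r) (ldimNat G) := by
  have hmax : max (Ldim (Restrict G x false)) (Ldim (Restrict G x true)) ≤ Ldim G :=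
    max_le (ldim_mono (restrict_subset G x false)) (ldim_mono (restrict_subset G x true))
  rw [le_antisymm_iff, and_iff_left hmax, ldim_eq_ldimNat hne hG, le_max_iff, le_ldim_iff,
    le_ldim_iff, Bool.exists_bool]

end LittlestoneDimension

abbrev Learner (X : Type*) := List (X × Bool) → X → Bool

section Mistakes

variable {X : Type*}

theorem mistakesFrom_append (A : Learner X) (P S₁ S₂ : List (X × Bool)) :
    MistakesFrom A P (S₁ ++ S₂) = MistakesFrom A P S₁ + MistakesFrom A (P ++ S₁) S₂ := by
  induction S₁ generalizing P with
  | nil => simp [MistakesFrom]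
  | cons p S₁ ih =>
    rw [List.cons_append, MistakesFrom, MistakesFrom, ih, List.append_assoc, List.singleton_append,
      Nat.add_assoc]

theorem mistakes_append (A : Learner X) (P Q : List (X × Bool)) :
    Mistakes A (P ++ Q) = Mistakes A P + MistakesFrom A P Q := by
  simpa [Mistakes] using mistakesFrom_append A [] P Q

theorem mistakes_append_singleton (A : Learner X) (P : List (X × Bool)) (p : X × Bool) :
    Mistakes A (P ++ [p]) = Mistakes A P + if A P p.1 ≠ p.2 then 1 else 0 := by
  simp [mistakes_append, MistakesFrom]

end Mistakes

section Learners

variable {X : Type*} {H : Set (X → Bool)} {A : Learner X} {d : ℕ}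

theorem bddAbove_shatters_vs (hd : Ldim H = ((d : ℕ∞) : WithBot ℕ∞)) (P : List (X × Bool)) :
    BddAbove {k | Shatters (VS H P) k} :=
  bddAbove_shatters hd.le (vs_subset H P)

theorem ldimNat_vs_nil (hd : Ldim H = ((d : ℕ∞) : WithBot ℕ∞)) : ldimNat (VS H []) = d := by
  rw [vs_nil, ldimNat_eq_of_ldim_eq hd]

/-- The adversary answers every prediction with the opposite label, which keeps a shattered
tree of one less depth alive. -/
theorem exists_mistakesFrom_ge_of_shatters (A : Learner X) :
    ∀ {k : ℕ} {P : List (X × Bool)}, Shatters (VS H P) k →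
      ∃ S', Realizable H (P ++ S') ∧ k ≤ MistakesFrom A P S'
  | 0, _, h => ⟨[], by rwa [List.append_nil], Nat.zero_le _⟩
  | k + 1, P, ⟨x, hf, ht⟩ => by
    have hsh : Shatters (VS H (P ++ [(x, !A P x)])) k := by
      rw [vs_append_singleton]
      cases A P x <;> assumption
    obtain ⟨S', hre, hk⟩ := exists_mistakesFrom_ge_of_shatters A hsh
    refine ⟨(x, !A P x) :: S', by simpa using hre, ?_⟩
    simp only [MistakesFrom, ne_eq, Bool.ne_not, if_true]
    omega

def DecreasesLdimOnMistakes (H : Set (X → Bool)) (A : Learner X) : Prop :=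
  ∀ (P : List (X × Bool)) (p : X × Bool), Realizable H (P ++ [p]) → A P p.1 ≠ p.2 →
    ldimNat (VS H (P ++ [p])) < ldimNat (VS H P)

theorem DecreasesLdimOnMistakes.mistakesFrom_add_le (hd : Ldim H = ((d : ℕ∞) : WithBot ℕ∞))
    (hA : DecreasesLdimOnMistakes H A) :
    ∀ (S P : List (X × Bool)), Realizable H (P ++ S) →
      MistakesFrom A P S + ldimNat (VS H (P ++ S)) ≤ ldimNat (VS H P)
  | [], _, _ => by simp [MistakesFrom]
  | p :: S, P, hre => by
    rw [show P ++ p :: S = P ++ [p] ++ S by simp] at hre ⊢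
    have ih := hA.mistakesFrom_add_le hd S (P ++ [p]) hre
    simp only [MistakesFrom]
    by_cases hp : A P p.1 = p.2
    · have := ldimNat_mono (vs_append_subset H P [p]) (bddAbove_shatters_vs hd P)
      simp only [hp, ne_eq, not_true_eq_false, if_false]
      omega
    · have := hA P p hre.of_append hp
      simp only [hp, ne_eq, not_false_eq_true, if_true]
      omega

theorem DecreasesLdimOnMistakes.mistakes_add_le (hd : Ldim H = ((d : ℕ∞) : WithBot ℕ∞))
    (hA : DecreasesLdimOnMistakes H A) {S : List (X × Bool)} (hS : Realizable H S) :
    Mistakes A S + ldimNat (VS H S) ≤ d := by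
  simpa [Mistakes, ldimNat_vs_nil hd] using hA.mistakesFrom_add_le hd S [] (by simpa using hS)

/-- Littlestone's Standard Optimal Algorithm. -/
noncomputable def SOA (H : Set (X → Bool)) : Learner X := fun P x =>
  decide (Ldim (Restrict (VS H P) x false) ≤ Ldim (Restrict (VS H P) x true))

theorem ldim_restrict_le_soa (H : Set (X → Bool)) (P : List (X × Bool)) (x : X) (r : Bool) :
    Ldim (Restrict (VS H P) x r) ≤ Ldim (Restrict (VS H P) x (SOA H P x)) := by
  by_cases h : Ldim (Restrict (VS H P) x false) ≤ Ldim (Restrict (VS H P) x true)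
  · cases r <;> simp [SOA, h]
  · cases r <;> simp [SOA, h, (not_le.mp h).le]

theorem decreasesLdimOnMistakes_soa (hd : Ldim H = ((d : ℕ∞) : WithBot ℕ∞)) :
    DecreasesLdimOnMistakes H (SOA H) := by
  intro P p hre hne
  rw [ldimNat_lt_iff hre.vs_nonempty (bddAbove_shatters_vs hd _), vs_append_singleton]
  intro hy
  have hsoa : Shatters (Restrict (VS H P) p.1 !p.2) (ldimNat (VS H P)) := by
    rw [← Bool.eq_not_iff.mpr hne]
    exact le_ldim_iff.mp ((le_ldim_iff.mpr hy).trans (ldim_restrict_le_soa H P p.1 p.2))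
  exact (le_ldimNat (bddAbove_shatters_vs hd P) (shatters_succ_of_restrict hy hsoa)).not_gt
    (Nat.lt_succ_self _)

noncomputable def soaUpdate (H : Set (X → Bool)) (P : List (X × Bool)) (x : X) (b : Bool) :
    Learner X := fun Q z =>
  if Q = P ∧ z = x then b else SOA H Q z

theorem decreasesLdimOnMistakes_soaUpdate (hd : Ldim H = ((d : ℕ∞) : WithBot ℕ∞))
    {P : List (X × Bool)} {x : X} {b : Bool}
    (h : ∀ w, w ≠ b → Realizable H (P ++ [(x, w)]) →
      ldimNat (VS H (P ++ [(x, w)])) < ldimNat (VS H P)) :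
    DecreasesLdimOnMistakes H (soaUpdate H P x b) := by
  intro Q q hre hne
  by_cases hQ : Q = P ∧ q.1 = x
  · obtain ⟨rfl, hx⟩ := hQ
    obtain ⟨x', w⟩ := q
    simp only at hx
    subst hx
    simp only [soaUpdate, and_self, if_true] at hne
    exact h w (Ne.symm hne) hre
  · exact decreasesLdimOnMistakes_soa hd Q q hre (by simpa [soaUpdate, hQ] using hne)

end Learners

section Optimality

variable {X : Type*} {H : Set (X → Bool)} {A : Learner X} {d : ℕ} {P : List (X × Bool)}

theorem mistakes_le_MB (A : Learner X) {S : List (X × Bool)} (hS : Realizable H S) :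
    (Mistakes A S : ℕ∞) ≤ MB A H :=
  le_iSup₂ (f := fun (S : List (X × Bool)) (_ : S ∈ {S | Realizable H S}) =>
    (Mistakes A S : ℕ∞)) S hS

theorem MB_le_coe_iff {c : ℕ} : MB A H ≤ c ↔ ∀ S, Realizable H S → Mistakes A S ≤ c :=
  ⟨fun h S hS => by exact_mod_cast (mistakes_le_MB A hS).trans h,
    fun h => iSup₂_le fun S hS => by exact_mod_cast h S hS⟩

theorem coe_le_MB (hd : Ldim H = ((d : ℕ∞) : WithBot ℕ∞)) (A : Learner X) : (d : ℕ∞) ≤ MB A H := by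
  have hsh : Shatters (VS H []) d := by rw [vs_nil]; exact le_ldim_iff.mp hd.ge
  obtain ⟨S, hS, hk⟩ := exists_mistakesFrom_ge_of_shatters A hsh
  exact (Nat.cast_le.mpr hk).trans (mistakes_le_MB A hS)

theorem iInf_MB_eq (hd : Ldim H = ((d : ℕ∞) : WithBot ℕ∞)) : ⨅ B : Learner X, MB B H = d :=
  le_antisymm
    ((iInf_le _ (SOA H)).trans
      (MB_le_coe_iff.mpr fun _ hS => by
        have := (decreasesLdimOnMistakes_soa hd).mistakes_add_le hd hS
        omega))
    (le_iInf (coe_le_MB hd))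

theorem isOptimal_iff (hd : Ldim H = ((d : ℕ∞) : WithBot ℕ∞)) :
    IsOptimal A H ↔ ∀ S, Realizable H S → Mistakes A S ≤ d := by
  rw [IsOptimal, iInf_MB_eq hd, ← MB_le_coe_iff]
  exact ⟨le_of_eq, fun h => le_antisymm h (coe_le_MB hd A)⟩

theorem DecreasesLdimOnMistakes.isOptimal (hd : Ldim H = ((d : ℕ∞) : WithBot ℕ∞))
    (hA : DecreasesLdimOnMistakes H A) : IsOptimal A H :=
  (isOptimal_iff hd).mpr fun _ hS => by
    have := hA.mistakes_add_le hd hS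
    omega

/-- Otherwise the adversary could extend `P` so as to force more than `d` mistakes. -/
theorem IsOptimal.mistakes_add_ldimNat_le (hd : Ldim H = ((d : ℕ∞) : WithBot ℕ∞))
    (hA : IsOptimal A H) (hP : Realizable H P) : Mistakes A P + ldimNat (VS H P) ≤ d := by
  obtain ⟨S, hS, hk⟩ := exists_mistakesFrom_ge_of_shatters A
    (shatters_ldimNat hP.vs_nonempty (bddAbove_shatters_vs hd P))
  have := (isOptimal_iff hd).mp hA _ hS
  rw [mistakes_append] at this
  omega

theorem IsOptimal.apply_eq_of_shatters (hd : Ldim H = ((d : ℕ∞) : WithBot ℕ∞))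
    (hA : IsOptimal A H) (htight : Mistakes A P + ldimNat (VS H P) = d) {x : X} {r : Bool}
    (hr : Shatters (Restrict (VS H P) x r) (ldimNat (VS H P))) : A P x = r := by
  by_contra hne
  have hsh : Shatters (VS H (P ++ [(x, r)])) (ldimNat (VS H P)) := by
    rwa [vs_append_singleton]
  have hbudget := hA.mistakes_add_ldimNat_le hd (P := P ++ [(x, r)]) hsh.nonempty
  have := le_ldimNat (bddAbove_shatters_vs hd _) hsh
  rw [mistakes_append_singleton, if_pos hne] at hbudget
  omega

theorem IsOptimal.mistakes_add_ldimNat_append_eq (hd : Ldim H = ((d : ℕ∞) : WithBot ℕ∞))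
    (hA : IsOptimal A H) (htight : Mistakes A P + ldimNat (VS H P) = d) {p : X × Bool}
    (hre : Realizable H (P ++ [p]))
    (hmax : ∃ r, Shatters (Restrict (VS H P) p.1 r) (ldimNat (VS H P)))
    (hdrop : ldimNat (VS H P) ≤ ldimNat (VS H (P ++ [p])) + 1) :
    Mistakes A (P ++ [p]) + ldimNat (VS H (P ++ [p])) = d := by
  have hbudget := hA.mistakes_add_ldimNat_le hd hre
  rw [mistakes_append_singleton] at hbudget ⊢
  by_cases hp : A P p.1 = p.2
  · -- a correct prediction must follow the restriction that keeps the dimension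
    obtain ⟨r, hr⟩ := hmax
    obtain rfl : r = p.2 := (hA.apply_eq_of_shatters hd htight hr).symm.trans hp
    have := le_ldimNat (bddAbove_shatters_vs hd _)
      (show Shatters (VS H (P ++ [p])) _ by rwa [vs_append_singleton])
    rw [if_neg (not_not.mpr hp)] at hbudget ⊢
    omega
  · rw [if_pos hp] at hbudget ⊢
    omega

theorem exists_isOptimal_mistakes_add_lt (hd : Ldim H = ((d : ℕ∞) : WithBot ℕ∞))
    {p : X × Bool} {S : List (X × Bool)} (hre : Realizable H (P ++ p :: S)) (b : Bool)
    (hb : ∀ w, w ≠ b → Realizable H (P ++ [(p.1, w)]) →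
      ldimNat (VS H (P ++ [(p.1, w)])) < ldimNat (VS H P))
    (hloss : (if b ≠ p.2 then 1 else 0) + ldimNat (VS H (P ++ [p])) < ldimNat (VS H P)) :
    ∃ A : Learner X, IsOptimal A H ∧
      Mistakes A (P ++ p :: S) + ldimNat (VS H (P ++ p :: S)) < d := by
  have hA := decreasesLdimOnMistakes_soaUpdate hd hb
  refine ⟨_, hA.isOptimal hd, ?_⟩
  rw [show P ++ p :: S = P ++ [p] ++ S by simp] at hre ⊢
  have hrest := hA.mistakesFrom_add_le hd S (P ++ [p]) hre
  have hpre := hA.mistakes_add_le hd hre.of_append.of_append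
  have hb : soaUpdate H P p.1 b P p.1 = b := if_pos ⟨rfl, rfl⟩
  rw [mistakes_append, mistakes_append_singleton, hb]
  omega

end Optimality

section Sample

variable {X : Type*} {H : Set (X → Bool)} {A : Learner X} {d : ℕ} {S : List (X × Bool)}

def LdimCondition (H : Set (X → Bool)) (S : List (X × Bool)) (t : Fin S.length) : Prop :=
  Ldim (VS H (S.take t.val)) =
      max (Ldim (Restrict (VS H (S.take t.val)) (S.get t).1 false))
        (Ldim (Restrict (VS H (S.take t.val)) (S.get t).1 true)) ∧
    Ldim (VS H (S.take t.val)) ≤ Ldim (VS H (S.take (t.val + 1))) + 1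

theorem take_succ_eq_append_get (S : List (X × Bool)) (t : Fin S.length) :
    S.take (t.val + 1) = S.take t.val ++ [S.get t] :=
  (List.take_concat_get' S t t.isLt).symm

theorem ldimCondition_iff (hd : Ldim H = ((d : ℕ∞) : WithBot ℕ∞)) (hS : Realizable H S)
    (t : Fin S.length) :
    LdimCondition H S t ↔
      (∃ r, Shatters (Restrict (VS H (S.take t.val)) (S.get t).1 r)
        (ldimNat (VS H (S.take t.val)))) ∧
      ldimNat (VS H (S.take t.val)) ≤ ldimNat (VS H (S.take (t.val + 1))) + 1 := by
  have hne : ∀ n, (VS H (S.take n)).Nonempty := fun n => (hS.take n).vs_nonempty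
  refine and_congr (ldim_eq_max_restrict_iff (hne _) (bddAbove_shatters_vs hd _) _) ?_
  rw [ldim_eq_ldimNat (hne _) (bddAbove_shatters_vs hd _),
    ldim_eq_ldimNat (hne _) (bddAbove_shatters_vs hd _)]
  norm_cast

theorem IsOptimal.mistakes_take_add_ldimNat_eq (hd : Ldim H = ((d : ℕ∞) : WithBot ℕ∞))
    (hS : Realizable H S) (hA : IsOptimal A H) (hC : ∀ t, LdimCondition H S t) :
    ∀ n ≤ S.length, Mistakes A (S.take n) + ldimNat (VS H (S.take n)) = d
  | 0, _ => by simp [Mistakes, MistakesFrom, ldimNat_vs_nil hd]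
  | n + 1, hn => by
    let t : Fin S.length := ⟨n, hn⟩
    obtain ⟨hmax, hdrop⟩ := (ldimCondition_iff hd hS t).mp (hC t)
    rw [take_succ_eq_append_get S t] at hdrop ⊢
    exact hA.mistakes_add_ldimNat_append_eq hd
      (hA.mistakes_take_add_ldimNat_eq hd hS hC n (by omega))
      (take_succ_eq_append_get S t ▸ hS.take _) hmax hdrop

theorem IsOptimal.apply_eq_of_ldim_lt (hd : Ldim H = ((d : ℕ∞) : WithBot ℕ∞))
    (hS : Realizable H S) (hA : IsOptimal A H) (hC : ∀ t, LdimCondition H S t)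
    (t : Fin S.length) {r : Bool}
    (hr : Ldim (Restrict (VS H (S.take t.val)) (S.get t).1 (!r)) <
      Ldim (Restrict (VS H (S.take t.val)) (S.get t).1 r)) :
    A (S.take t.val) (S.get t).1 = r := by
  have hmax : Ldim (VS H (S.take t.val)) = Ldim (Restrict (VS H (S.take t.val)) (S.get t).1 r) := by
    rw [(hC t).1]
    cases r
    exacts [max_eq_left hr.le, max_eq_right hr.le]
  refine hA.apply_eq_of_shatters hd
    (hA.mistakes_take_add_ldimNat_eq hd hS hC t t.isLt.le) (le_ldim_iff.mp ?_)
  rw [← hmax, ldim_eq_ldimNat (hS.take t).vs_nonempty (bddAbove_shatters_vs hd _)]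

theorem ldimCondition_of_forall_isOptimal (hd : Ldim H = ((d : ℕ∞) : WithBot ℕ∞))
    (hS : Realizable H S)
    (hB : ∀ A : Learner X, IsOptimal A H → Mistakes A S + ldimNat (VS H S) = d)
    (t : Fin S.length) : LdimCondition H S t := by
  have hsplit : S = S.take t.val ++ S.get t :: S.drop (t.val + 1) := by
    rw [List.get_eq_getElem, List.getElem_cons_drop, List.take_append_drop]
  rw [ldimCondition_iff hd hS t, take_succ_eq_append_get]
  have hre := take_succ_eq_append_get S t ▸ hS.take (t.val + 1)
  set P := S.take t.val
  set p := S.get t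
  have hdrop_of_not_shatters : ∀ w, Realizable H (P ++ [(p.1, w)]) →
      ¬ Shatters (Restrict (VS H P) p.1 w) (ldimNat (VS H P)) →
      ldimNat (VS H (P ++ [(p.1, w)])) < ldimNat (VS H P) := fun w hw hns => by
    rwa [ldimNat_lt_iff hw.vs_nonempty (bddAbove_shatters_vs hd _), vs_append_singleton]
  by_contra hfail
  obtain ⟨A, hA, hlt⟩ : ∃ A : Learner X, IsOptimal A H ∧
      Mistakes A S + ldimNat (VS H S) < d := by
    rw [hsplit] at hS ⊢
    rcases not_and_or.mp hfail with hmax | hdrop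
    · -- both labels lose dimension: predicting correctly wastes the step
      have hmax := not_exists.mp hmax
      refine exists_isOptimal_mistakes_add_lt hd hS p.2
        (fun w _ hw => hdrop_of_not_shatters w hw (hmax w)) ?_
      simpa using hdrop_of_not_shatters p.2 hre (hmax p.2)
    · -- the dimension drops by at least two: a mistake here is cheap
      refine exists_isOptimal_mistakes_add_lt hd hS (!p.2) (fun w hw _ => ?_)
        (by rw [if_pos (Bool.not_ne_self p.2)]; omega)
      rw [Bool.ne_not.mp hw, Prod.mk.eta]
      omega
  exact hlt.ne (hB A hA)

theorem mistakes_add_ldim_eq_iff (hd : Ldim H = ((d : ℕ∞) : WithBot ℕ∞)) (hS : Realizable H S)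
    (A : Learner X) :
    ((Mistakes A S : ℕ∞) : WithBot ℕ∞) + Ldim (VS H S) = Ldim H ↔
      Mistakes A S + ldimNat (VS H S) = d := by
  rw [hd, ldim_eq_ldimNat hS.vs_nonempty (bddAbove_shatters_vs hd S)]
  norm_cast

end Sample

/-- equivalence of the two conditions of Lemma 8, together with the
argmax-prediction property of optimal learners when they hold. -/
theorem stmt10 {X : Type*} (H : Set (X → Bool)) (d : ℕ)
    (hd : Ldim H = ((d : ℕ∞) : WithBot ℕ∞))
    (S : List (X × Bool)) (hS : Realizable H S) :
    ((∀ t : Fin S.length,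
        Ldim (VS H (S.take t.val)) =
          max (Ldim (Restrict (VS H (S.take t.val)) (S.get t).1 false))
              (Ldim (Restrict (VS H (S.take t.val)) (S.get t).1 true)) ∧
        Ldim (VS H (S.take t.val)) ≤ Ldim (VS H (S.take (t.val + 1))) + 1) ↔
      (∀ A : List (X × Bool) → X → Bool, IsOptimal A H →
        ((Mistakes A S : ℕ∞) : WithBot ℕ∞) + Ldim (VS H S) = Ldim H)) ∧
    ((∀ t : Fin S.length,
        Ldim (VS H (S.take t.val)) =
          max (Ldim (Restrict (VS H (S.take t.val)) (S.get t).1 false))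
              (Ldim (Restrict (VS H (S.take t.val)) (S.get t).1 true)) ∧
        Ldim (VS H (S.take t.val)) ≤ Ldim (VS H (S.take (t.val + 1))) + 1) →
      ∀ t : Fin S.length, ∀ A : List (X × Bool) → X → Bool, IsOptimal A H →
        ∀ r : Bool,
          Ldim (Restrict (VS H (S.take t.val)) (S.get t).1 (!r)) <
            Ldim (Restrict (VS H (S.take t.val)) (S.get t).1 r) →
          A (S.take t.val) (S.get t).1 = r) := by
  refine ⟨⟨fun hC A hA => ?_, fun hB => ldimCondition_of_forall_isOptimal hd hS
    fun A hA => (mistakes_add_ldim_eq_iff hd hS A).mp (hB A hA)⟩,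
    fun hC t A hA r hr => hA.apply_eq_of_ldim_lt hd hS hC t hr⟩
  rw [mistakes_add_ldim_eq_iff hd hS]
  simpa using hA.mistakes_take_add_ldimNat_eq hd hS hC S.length le_rfl
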